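/- arXiv:0707.1532 — 3 statements merged into one kernel-verified Lean document; each statement's English description precedes it below -/
import Mathlib

section
/- (Dilworth's Theorem) Every finite poset of width w admits a decomposition into exactly w disjoint chains. -/
def IsChainF {α : Type*} (r : α → α → Prop) (C : Finset α) : Prop :=
  ∀ x ∈ C, ∀ y ∈ C, x ≠ y → r x y ∨ r y x

def IsAntichainF {α : Type*} (r : α → α → Prop) (A : Finset α) : Prop :=
  ∀ x ∈ A, ∀ y ∈ A, x ≠ y → ¬ r x y ∧ ¬ r y x

open scoped Classical
set_option linter.unusedSectionVars false
set_option maxHeartbeats 1000000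

section DilworthAux

variable {α : Type*} [DecidableEq α] {r : α → α → Prop}

lemma antichainF_subset {A B : Finset α} (h : B ⊆ A) (hA : IsAntichainF r A) :
    IsAntichainF r B := fun x hx y hy hxy => hA x (h hx) y (h hy) hxy

lemma exists_maximalF (hirr : ∀ x, ¬ r x x) (htrans : Transitive r)
    {s : Finset α} (hs : s.Nonempty) : ∃ a ∈ s, ∀ x ∈ s, ¬ r a x := by
  obtain ⟨a, ha, hmax⟩ := Finset.exists_max_image s
    (fun a => (s.filter (fun y => y = a ∨ r y a)).card) hs
  refine ⟨a, ha, fun x hx hrax => ?_⟩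
  have hss : s.filter (fun y => y = a ∨ r y a) ⊂ s.filter (fun y => y = x ∨ r y x) := by
    constructor
    · intro y hy
      simp only [Finset.mem_filter] at hy ⊢
      refine ⟨hy.1, Or.inr ?_⟩
      rcases hy.2 with h | h
      · subst h; exact hrax
      · exact htrans h hrax
    · intro hsub
      have hxmem : x ∈ s.filter (fun y => y = x ∨ r y x) := by simp [hx]
      have := hsub hxmem
      simp only [Finset.mem_filter] at this
      rcases this.2 with h | h
      · exact hirr _ (h ▸ hrax)
      · exact hirr _ (htrans hrax h)
  exact absurd (hmax x hx) (not_le.mpr (Finset.card_lt_card hss))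

noncomputable def widthF (r : α → α → Prop) (s : Finset α) : ℕ :=
  ((s.powerset.filter (fun A => IsAntichainF r A)).image Finset.card).max'
    ⟨0, Finset.mem_image.mpr ⟨∅, Finset.mem_filter.mpr
      ⟨Finset.mem_powerset.mpr (Finset.empty_subset s), fun x hx => by simp at hx⟩, rfl⟩⟩

lemma le_widthF {s A : Finset α} (hAs : A ⊆ s) (hA : IsAntichainF r A) :
    A.card ≤ widthF r s :=
  Finset.le_max' _ _ (Finset.mem_image.mpr
    ⟨A, Finset.mem_filter.mpr ⟨Finset.mem_powerset.mpr hAs, hA⟩, rfl⟩)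

lemma exists_widthF (r : α → α → Prop) (s : Finset α) :
    ∃ A, A ⊆ s ∧ IsAntichainF r A ∧ A.card = widthF r s := by
  have h := Finset.max'_mem ((s.powerset.filter (fun A => IsAntichainF r A)).image Finset.card)
    ⟨0, Finset.mem_image.mpr ⟨∅, Finset.mem_filter.mpr
      ⟨Finset.mem_powerset.mpr (Finset.empty_subset s), fun x hx => by simp at hx⟩, rfl⟩⟩
  obtain ⟨A, hA, hcard⟩ := Finset.mem_image.mp h
  obtain ⟨hAs, hAanti⟩ := Finset.mem_filter.mp hA
  exact ⟨A, Finset.mem_powerset.mp hAs, hAanti, hcard⟩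

lemma widthF_empty (r : α → α → Prop) : widthF r (∅ : Finset α) = 0 := by
  obtain ⟨A, hAs, _, hcard⟩ := exists_widthF r (∅ : Finset α)
  rw [← hcard]
  simp [Finset.subset_empty.mp hAs]

lemma chain_inter_antichain {C A : Finset α} (hC : IsChainF r C) (hA : IsAntichainF r A) :
    (A ∩ C).card ≤ 1 := by
  rw [Finset.card_le_one]
  intro x hx y hy
  by_contra hxy
  rw [Finset.mem_inter] at hx hy
  rcases hC x hx.2 y hy.2 hxy with h | h
  · exact (hA x hx.1 y hy.1 hxy).1 h
  · exact (hA x hx.1 y hy.1 hxy).2 h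

lemma meets_every_chain {𝒞 : Finset (Finset α)} {s A : Finset α}
    (hchain : ∀ C ∈ 𝒞, IsChainF r C)
    (hcover : ∀ x ∈ s, ∃ C ∈ 𝒞, x ∈ C)
    (hAs : A ⊆ s) (hA : IsAntichainF r A) (hcard : 𝒞.card ≤ A.card) :
    ∀ C ∈ 𝒞, ∃ b, b ∈ A ∧ b ∈ C := by
  by_contra hcon
  push_neg at hcon
  obtain ⟨C₀, hC₀, hC₀empty⟩ := hcon
  have hsub : A ⊆ 𝒞.biUnion (fun C => A ∩ C) := by
    intro x hx
    obtain ⟨C, hC, hxC⟩ := hcover x (hAs hx)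
    exact Finset.mem_biUnion.mpr ⟨C, hC, Finset.mem_inter.mpr ⟨hx, hxC⟩⟩
  have h1 : A.card ≤ ∑ C ∈ 𝒞, (A ∩ C).card :=
    le_trans (Finset.card_le_card hsub) (Finset.card_biUnion_le)
  have h2 : ∑ C ∈ 𝒞, (A ∩ C).card < ∑ C ∈ 𝒞, 1 := by
    apply Finset.sum_lt_sum
    · intro C hC; exact chain_inter_antichain (hchain C hC) hA
    · refine ⟨C₀, hC₀, ?_⟩
      have : A ∩ C₀ = ∅ := by
        rw [Finset.eq_empty_iff_forall_notMem]
        intro x hx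
        rw [Finset.mem_inter] at hx
        exact hC₀empty x hx.1 hx.2
      simp [this]
  rw [Finset.sum_const, smul_eq_mul, mul_one] at h2
  omega

lemma dilworth_aux (hirr : ∀ x, ¬ r x x) (htrans : Transitive r) :
    ∀ n (s : Finset α), s.card ≤ n →
    ∃ 𝒞 : Finset (Finset α),
      (∀ C ∈ 𝒞, IsChainF r C) ∧
      (∀ C ∈ 𝒞, C.Nonempty) ∧
      (∀ C ∈ 𝒞, ∀ D ∈ 𝒞, C ≠ D → Disjoint C D) ∧
      (∀ C ∈ 𝒞, C ⊆ s) ∧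
      (∀ x ∈ s, ∃ C ∈ 𝒞, x ∈ C) ∧
      𝒞.card = widthF r s := by
  intro n
  induction n with
  | zero =>
    intro s hs
    have hse : s = ∅ := Finset.card_eq_zero.mp (Nat.le_zero.mp hs)
    subst hse
    exact ⟨∅, by simp, by simp, by simp, by simp, by simp, by simp [widthF_empty]⟩
  | succ n ih =>
    intro s hs
    rcases s.eq_empty_or_nonempty with hse | hsne
    · subst hse
      exact ⟨∅, by simp, by simp, by simp, by simp, by simp, by simp [widthF_empty]⟩
    obtain ⟨a, has, hamax⟩ := exists_maximalF hirr htrans hsne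
    set s' := s.erase a with hs'def
    have hs'card : s'.card ≤ n := by
      have h1 : s'.card = s.card - 1 := Finset.card_erase_of_mem has
      omega
    obtain ⟨𝒞', hchain', hne', hdisj', hsub', hcov', hcard'⟩ := ih s' hs'card
    set w' := widthF r s' with hw'def
    have hs'sub : s' ⊆ s := Finset.erase_subset a s
    have hanots' : a ∉ s' := Finset.notMem_erase a s
    -- bound: every antichain in s has card ≤ w' + 1
    have hbound : ∀ B ⊆ s, IsAntichainF r B → B.card ≤ w' + 1 := by
      intro B hBs hBanti
      have h1 : B.erase a ⊆ s' := fun x hx => by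
        rw [Finset.mem_erase] at hx ⊢
        exact ⟨hx.1, hBs hx.2⟩
      have h2 : (B.erase a).card ≤ w' :=
        le_widthF h1 (antichainF_subset (Finset.erase_subset a B) hBanti)
      have h3 := Finset.card_erase_of_mem (a := a) (s := B)
      by_cases hab : a ∈ B
      · have := h3 hab; omega
      · rw [Finset.erase_eq_of_notMem hab] at h2; omega
    -- T C : elements of C lying in some maximum antichain of s'
    set T : Finset α → Finset α := fun C =>
      C.filter (fun x => ∃ B, B ⊆ s' ∧ IsAntichainF r B ∧ B.card = w' ∧ x ∈ B) with hTdef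
    have hTop : ∀ C : {C // C ∈ 𝒞'}, ∃ m, m ∈ T C.1 ∧ ∀ x ∈ T C.1, x ≠ m → r x m := by
      rintro ⟨C, hC⟩
      obtain ⟨A₀, hA₀s, hA₀anti, hA₀card⟩ := exists_widthF r s'
      obtain ⟨b, hbA, hbC⟩ := meets_every_chain hchain' hcov' hA₀s hA₀anti
        (by rw [hcard', hA₀card]) C hC
      have hTne : (T C).Nonempty :=
        ⟨b, Finset.mem_filter.mpr ⟨hbC, A₀, hA₀s, hA₀anti, hA₀card, hbA⟩⟩
      obtain ⟨m, hm, hmmax⟩ := exists_maximalF hirr htrans hTne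
      refine ⟨m, hm, fun x hx hxm => ?_⟩
      have hxC : x ∈ C := (Finset.mem_filter.mp hx).1
      have hmC : m ∈ C := (Finset.mem_filter.mp hm).1
      rcases hchain' C hC x hxC m hmC hxm with h | h
      · exact h
      · exact absurd h (hmmax x hx)
    choose f hf1 hf2 using hTop
    have hfC : ∀ C : {C // C ∈ 𝒞'}, f C ∈ C.1 := fun C => (Finset.mem_filter.mp (hf1 C)).1
    have hfT : ∀ C : {C // C ∈ 𝒞'},
        ∃ B, B ⊆ s' ∧ IsAntichainF r B ∧ B.card = w' ∧ f C ∈ B :=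
      fun C => (Finset.mem_filter.mp (hf1 C)).2
    have hfinj : Function.Injective f := by
      intro C D h
      by_contra hne
      have hCD : C.1 ≠ D.1 := fun h' => hne (Subtype.ext h')
      have := (hdisj' C.1 C.2 D.1 D.2 hCD).forall_ne_finset (hfC C) (h ▸ hfC D)
      exact this rfl
    set A := 𝒞'.attach.image f with hAdef
    have hAcard : A.card = w' := by
      rw [hAdef, Finset.card_image_of_injective _ hfinj, Finset.card_attach, hcard']
    have hAs' : A ⊆ s' := by
      intro x hx
      obtain ⟨C, _, hxC⟩ := Finset.mem_image.mp hx
      exact hsub' C.1 C.2 (hxC ▸ hfC C)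
    -- key claim: no relation between elements of A in distinct chains
    have hkey : ∀ C D : {C // C ∈ 𝒞'}, C.1 ≠ D.1 → ¬ r (f C) (f D) := by
      intro C D hCD hr
      obtain ⟨B, hBs, hBanti, hBcard, hfDB⟩ := hfT D
      obtain ⟨b, hbB, hbC⟩ := meets_every_chain hchain' hcov' hBs hBanti
        (by rw [hcard', hBcard]) C.1 C.2
      have hbT : b ∈ T C.1 := Finset.mem_filter.mpr ⟨hbC, B, hBs, hBanti, hBcard, hbB⟩
      have hbfD : r b (f D) := by
        by_cases hbfC : b = f C
        · exact hbfC ▸ hr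
        · exact htrans (hf2 C b hbT hbfC) hr
      have hbD : b ≠ f D := by
        intro h
        exact (hdisj' C.1 C.2 D.1 D.2 hCD).forall_ne_finset hbC (h ▸ hfC D) rfl
      exact (hBanti b hbB (f D) hfDB hbD).1 hbfD
    have hAanti : IsAntichainF r A := by
      intro x hx y hy hxy
      obtain ⟨C, _, hxC⟩ := Finset.mem_image.mp hx
      obtain ⟨D, _, hyD⟩ := Finset.mem_image.mp hy
      subst hxC; subst hyD
      have hCD : C.1 ≠ D.1 := by
        intro h
        exact hxy (congrArg f (Subtype.ext h))
      exact ⟨hkey C D hCD, hkey D C hCD.symm⟩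
    have hanotA : a ∉ A := fun h => hanots' (hAs' h)
    by_cases hcase : ∃ C : {C // C ∈ 𝒞'}, r (f C) a
    · -- Case 2: some maximum-antichain top is below a
      obtain ⟨C₀, hra⟩ := hcase
      set a₀ := f C₀ with ha₀def
      set K := insert a (C₀.1.filter (fun x => x = a₀ ∨ r x a₀)) with hKdef
      have hKchain : IsChainF r K := by
        intro x hx y hy hxy
        rw [hKdef, Finset.mem_insert] at hx hy
        have hbelow : ∀ z, z ∈ C₀.1.filter (fun x => x = a₀ ∨ r x a₀) → r z a := by
          intro z hz
          rcases (Finset.mem_filter.mp hz).2 with h | h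
          · exact h ▸ hra
          · exact htrans h hra
        rcases hx with hx | hx <;> rcases hy with hy | hy
        · exact absurd (hx.trans hy.symm) hxy
        · exact Or.inr (hx ▸ hbelow y hy)
        · exact Or.inl (hy ▸ hbelow x hx)
        · exact hchain' C₀.1 C₀.2 x (Finset.mem_filter.mp hx).1 y (Finset.mem_filter.mp hy).1 hxy
      have hKs : K ⊆ s := by
        intro x hx
        rw [hKdef, Finset.mem_insert] at hx
        rcases hx with hx | hx
        · exact hx ▸ has
        · exact hs'sub (hsub' C₀.1 C₀.2 (Finset.mem_filter.mp hx).1)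
      have haK : a ∈ K := Finset.mem_insert_self _ _
      set t := s \ K with htdef
      have hts' : t ⊆ s' := by
        intro x hx
        rw [htdef, Finset.mem_sdiff] at hx
        rw [Finset.mem_erase]
        exact ⟨fun h => hx.2 (h ▸ haK), hx.1⟩
      have htcard : t.card ≤ n := le_trans (Finset.card_le_card hts') hs'card
      obtain ⟨𝒟, hchainD, hneD, hdisjD, hsubD, hcovD, hcardD⟩ := ih t htcard
      have hw'pos : 1 ≤ w' := by
        rw [← hcard']
        exact Finset.card_pos.mpr ⟨C₀.1, C₀.2⟩
      -- width t = w' - 1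
      have hwt_le : widthF r t ≤ w' - 1 := by
        obtain ⟨B, hBt, hBanti, hBcard⟩ := exists_widthF r t
        have hBs' : B ⊆ s' := hBt.trans hts'
        have hle : B.card ≤ w' := le_widthF hBs' hBanti
        have hne : B.card ≠ w' := by
          intro hBw
          obtain ⟨b, hbB, hbC⟩ := meets_every_chain hchain' hcov' hBs' hBanti
            (by rw [hcard', hBw]) C₀.1 C₀.2
          have hbT : b ∈ T C₀.1 := Finset.mem_filter.mpr ⟨hbC, B, hBs', hBanti, hBw, hbB⟩
          have hbK : b ∈ K := by
            rw [hKdef, Finset.mem_insert]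
            by_cases hb : b = a₀
            · exact Or.inr (Finset.mem_filter.mpr ⟨hbC, Or.inl hb⟩)
            · exact Or.inr (Finset.mem_filter.mpr ⟨hbC, Or.inr (hf2 C₀ b hbT hb)⟩)
          have := hBt hbB
          rw [htdef, Finset.mem_sdiff] at this
          exact this.2 hbK
        omega
      have hwt_ge : w' - 1 ≤ widthF r t := by
        have hA'sub : A.erase a₀ ⊆ t := by
          intro x hx
          rw [Finset.mem_erase] at hx
          obtain ⟨C, _, hxC⟩ := Finset.mem_image.mp hx.2
          subst hxC
          have hCC₀ : C.1 ≠ C₀.1 := by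
            intro h
            exact hx.1 (congrArg f (Subtype.ext h))
          rw [htdef, Finset.mem_sdiff]
          refine ⟨hs'sub (hAs' hx.2), ?_⟩
          rw [hKdef, Finset.mem_insert]
          rintro (h | h)
          · exact hanots' (hAs' (h ▸ hx.2))
          · exact (hdisj' C.1 C.2 C₀.1 C₀.2 hCC₀).forall_ne_finset (hfC C)
              (Finset.mem_filter.mp h).1 rfl
        have ha₀A : a₀ ∈ A := Finset.mem_image.mpr ⟨C₀, Finset.mem_attach _ _, rfl⟩
        have : (A.erase a₀).card = w' - 1 := by
          rw [Finset.card_erase_of_mem ha₀A, hAcard]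
        rw [← this]
        exact le_widthF hA'sub (antichainF_subset (Finset.erase_subset _ _) hAanti)
      have hwt : widthF r t = w' - 1 := le_antisymm hwt_le hwt_ge
      -- width s = w'
      have hws : widthF r s = w' := by
        apply le_antisymm
        · obtain ⟨B, hBs, hBanti, hBcard⟩ := exists_widthF r s
          rw [← hBcard]
          have hle := hbound B hBs hBanti
          have hne : B.card ≠ w' + 1 := by
            intro hBw
            have haB : a ∈ B := by
              by_contra haB
              have : B ⊆ s' := fun x hx => Finset.mem_erase.mpr
                ⟨fun h => haB (h ▸ hx), hBs hx⟩
              have := le_widthF this hBanti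
              omega
            have hB'sub : B.erase a ⊆ s' := fun x hx => by
              rw [Finset.mem_erase] at hx
              exact Finset.mem_erase.mpr ⟨hx.1, hBs hx.2⟩
            have hB'anti : IsAntichainF r (B.erase a) :=
              antichainF_subset (Finset.erase_subset _ _) hBanti
            have hB'card : (B.erase a).card = w' := by
              rw [Finset.card_erase_of_mem haB, hBw]; omega
            obtain ⟨b, hbB, hbC⟩ := meets_every_chain hchain' hcov' hB'sub hB'anti
              (by rw [hcard', hB'card]) C₀.1 C₀.2
            have hbT : b ∈ T C₀.1 := Finset.mem_filter.mpr
              ⟨hbC, B.erase a, hB'sub, hB'anti, hB'card, hbB⟩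
            have hrba : r b a := by
              by_cases hb : b = a₀
              · exact hb ▸ hra
              · exact htrans (hf2 C₀ b hbT hb) hra
            have hba : b ≠ a := (Finset.mem_erase.mp hbB).1
            exact (hBanti b (Finset.mem_of_mem_erase hbB) a haB hba).1 hrba
          omega
        · exact hAcard ▸ le_widthF (hAs'.trans hs'sub) hAanti
      -- assemble
      have hKnotD : K ∉ 𝒟 := by
        intro h
        have := hsubD K h haK
        rw [htdef, Finset.mem_sdiff] at this
        exact this.2 haK
      refine ⟨insert K 𝒟, ?_, ?_, ?_, ?_, ?_, ?_⟩
      · intro C hC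
        rcases Finset.mem_insert.mp hC with h | h
        · exact h ▸ hKchain
        · exact hchainD C h
      · intro C hC
        rcases Finset.mem_insert.mp hC with h | h
        · exact ⟨a, h ▸ haK⟩
        · exact hneD C h
      · intro C hC D hD hCD
        have hdisjKD : ∀ D ∈ 𝒟, Disjoint K D := by
          intro D hD
          rw [Finset.disjoint_left]
          intro x hxK hxD
          have := hsubD D hD hxD
          rw [htdef, Finset.mem_sdiff] at this
          exact this.2 hxK
        rcases Finset.mem_insert.mp hC with h | h <;> rcases Finset.mem_insert.mp hD with h' | h'
        · exact absurd (h.trans h'.symm) hCD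
        · exact h ▸ hdisjKD D h'
        · exact h' ▸ (hdisjKD C h).symm
        · exact hdisjD C h D h' hCD
      · intro C hC
        rcases Finset.mem_insert.mp hC with h | h
        · exact h ▸ hKs
        · exact (hsubD C h).trans ((Finset.sdiff_subset).trans (le_refl s))
      · intro x hx
        by_cases hxK : x ∈ K
        · exact ⟨K, Finset.mem_insert_self _ _, hxK⟩
        · obtain ⟨C, hC, hxC⟩ := hcovD x (by rw [htdef, Finset.mem_sdiff]; exact ⟨hx, hxK⟩)
          exact ⟨C, Finset.mem_insert_of_mem hC, hxC⟩
      · rw [Finset.card_insert_of_notMem hKnotD, hcardD, hwt, hws]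
        omega
    · -- Case 1: a incomparable with all tops; width s = w' + 1
      push_neg at hcase
      have hA'anti : IsAntichainF r (insert a A) := by
        intro x hx y hy hxy
        rcases Finset.mem_insert.mp hx with hx' | hx' <;>
          rcases Finset.mem_insert.mp hy with hy' | hy'
        · exact absurd (hx'.trans hy'.symm) hxy
        · subst hx'
          obtain ⟨D, _, hyD⟩ := Finset.mem_image.mp hy'
          subst hyD
          exact ⟨hamax _ (hs'sub (hAs' hy')), hcase D⟩
        · subst hy'
          obtain ⟨D, _, hxD⟩ := Finset.mem_image.mp hx'
          subst hxD
          exact ⟨hcase D, hamax _ (hs'sub (hAs' hx'))⟩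
        · exact hAanti x hx' y hy' hxy
      have hws : widthF r s = w' + 1 := by
        apply le_antisymm
        · obtain ⟨B, hBs, hBanti, hBcard⟩ := exists_widthF r s
          rw [← hBcard]
          exact hbound B hBs hBanti
        · have h1 : (insert a A).card = w' + 1 := by
            rw [Finset.card_insert_of_notMem hanotA, hAcard]
          have h2 : insert a A ⊆ s := by
            intro x hx
            rcases Finset.mem_insert.mp hx with h | h
            · exact h ▸ has
            · exact hs'sub (hAs' h)
          exact h1 ▸ le_widthF h2 hA'anti
      have hanotC : ({a} : Finset α) ∉ 𝒞' := by
        intro h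
        exact hanots' (hsub' _ h (Finset.mem_singleton_self a))
      refine ⟨insert {a} 𝒞', ?_, ?_, ?_, ?_, ?_, ?_⟩
      · intro C hC
        rcases Finset.mem_insert.mp hC with h | h
        · subst h
          intro x hx y hy hxy
          rw [Finset.mem_singleton] at hx hy
          exact absurd (hx.trans hy.symm) hxy
        · exact hchain' C h
      · intro C hC
        rcases Finset.mem_insert.mp hC with h | h
        · exact h ▸ ⟨a, Finset.mem_singleton_self a⟩
        · exact hne' C h
      · intro C hC D hD hCD
        have hdisja : ∀ D ∈ 𝒞', Disjoint ({a} : Finset α) D := by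
          intro D hD
          rw [Finset.disjoint_left]
          intro x hx hxD
          rw [Finset.mem_singleton] at hx
          exact hanots' (hsub' D hD (hx ▸ hxD))
        rcases Finset.mem_insert.mp hC with h | h <;> rcases Finset.mem_insert.mp hD with h' | h'
        · exact absurd (h.trans h'.symm) hCD
        · exact h ▸ hdisja D h'
        · exact h' ▸ (hdisja C h).symm
        · exact hdisj' C h D h' hCD
      · intro C hC
        rcases Finset.mem_insert.mp hC with h | h
        · subst h
          intro x hx
          rw [Finset.mem_singleton] at hx
          exact hx ▸ has
        · exact (hsub' C h).trans hs'sub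
      · intro x hx
        by_cases hxa : x = a
        · exact ⟨{a}, Finset.mem_insert_self _ _, hxa ▸ Finset.mem_singleton_self a⟩
        · obtain ⟨C, hC, hxC⟩ := hcov' x (Finset.mem_erase.mpr ⟨hxa, hx⟩)
          exact ⟨C, Finset.mem_insert_of_mem hC, hxC⟩
      · rw [Finset.card_insert_of_notMem hanotC, hcard', hws]

end DilworthAux

/-- Dilworth's theorem: a finite poset of width `w` (i.e. whose maximum antichain
has size `w`) can be partitioned into exactly `w` disjoint nonempty chains. -/
theorem dilworth {α : Type*} [Fintype α] [DecidableEq α] (r : α → α → Prop)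
    (hirr : ∀ x, ¬ r x x) (htrans : Transitive r) (w : ℕ)
    (hw : IsGreatest {k | ∃ A : Finset α, IsAntichainF r A ∧ A.card = k} w) :
    ∃ 𝒞 : Finset (Finset α),
      (∀ C ∈ 𝒞, IsChainF r C) ∧
      (∀ C ∈ 𝒞, C.Nonempty) ∧
      (∀ C ∈ 𝒞, ∀ D ∈ 𝒞, C ≠ D → Disjoint C D) ∧
      (∀ x : α, ∃ C ∈ 𝒞, x ∈ C) ∧
      𝒞.card = w := by
  have hwu : widthF r (Finset.univ : Finset α) = w := by
    apply le_antisymm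
    · obtain ⟨A, _, hAanti, hAcard⟩ := exists_widthF r (Finset.univ : Finset α)
      rw [← hAcard]
      exact hw.2 ⟨A, hAanti, rfl⟩
    · obtain ⟨A, hAanti, hAcard⟩ := hw.1
      rw [← hAcard]
      exact le_widthF (Finset.subset_univ A) hAanti
  obtain ⟨𝒞, h1, h2, h3, _, h5, h6⟩ :=
    dilworth_aux hirr htrans (Finset.univ : Finset α).card Finset.univ le_rfl
  exact ⟨𝒞, h1, h2, h3, fun x => h5 x (Finset.mem_univ x), h6.trans hwu⟩
end

section
/- Let w ≥ 1 and n ≥ w. Then the sum Σ_{t=2}^{w} (t−1) + Σ_{t=w+1}^{n} [ (w/t)·w + ((t−w)/t)·((w+1)/2) ] is at most ((w+1)/2)·n + ((w²−w)/2)·(ln n − ln w). -/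
open Finset in
lemma gauss_sum_aux (w : ℕ) : ∑ t ∈ Icc 2 w, ((t : ℝ) - 1) = ((w : ℝ)^2 - w) / 2 := by
  induction w with
  | zero => simp
  | succ k ih =>
    rcases Nat.lt_or_ge k 1 with hk | hk
    · interval_cases k <;> simp
    · rw [show k + 1 = k + 1 from rfl, Finset.sum_Icc_succ_top (by omega), ih]
      push_cast
      ring

open Finset in
lemma harmonic_log_aux (w : ℕ) (hw : 1 ≤ w) :
    ∀ n, w ≤ n → ∑ t ∈ Icc (w + 1) n, (1 : ℝ) / t ≤ Real.log n - Real.log w := by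
  intro n
  induction n with
  | zero => intro h; omega
  | succ m ih =>
    intro h
    rcases Nat.lt_or_ge m w with hm | hm
    · have : w = m + 1 := by omega
      subst this
      simp
    · have hm1 : (1 : ℝ) ≤ m := by exact_mod_cast hw.trans hm
      have hmpos : (0 : ℝ) < m := by linarith
      rw [Finset.sum_Icc_succ_top (by omega)]
      have key : (1 : ℝ) / (m + 1) ≤ Real.log (m + 1) - Real.log m := by
        have hx : (0 : ℝ) < (m : ℝ) / (m + 1) := by positivity
        have := Real.log_le_sub_one_of_pos hx
        rw [Real.log_div (by linarith) (by linarith)] at this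
        have h2 : (m : ℝ) / (m + 1) - 1 = -(1 / (m + 1)) := by field_simp; ring
        linarith [this, h2 ▸ this]
      have := ih hm
      push_cast
      push_cast at this key
      linarith

open Finset in
/-- Expected-query analysis of the randomized minimal-elements algorithm. -/
theorem randomized_minimal_query_bound (w n : ℕ) (hw : 1 ≤ w) (hn : w ≤ n) :
    (∑ t ∈ Icc 2 w, ((t : ℝ) - 1)) +
      ∑ t ∈ Icc (w + 1) n,
        ((w : ℝ) / t * w + ((t : ℝ) - w) / t * (((w : ℝ) + 1) / 2))
    ≤ ((w : ℝ) + 1) / 2 * n +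
        ((w : ℝ) ^ 2 - w) / 2 * (Real.log n - Real.log w) := by
  have hterm : ∀ t ∈ Icc (w + 1) n,
      ((w : ℝ) / t * w + ((t : ℝ) - w) / t * (((w : ℝ) + 1) / 2))
      = (((w : ℝ) + 1) / 2) + (((w : ℝ)^2 - w) / 2) * (1 / t) := by
    intro t ht
    have ht1 : w + 1 ≤ t := (Finset.mem_Icc.mp ht).1
    have htpos : (0 : ℝ) < t := by exact_mod_cast Nat.lt_of_lt_of_le (by omega) ht1
    field_simp
    ring
  rw [Finset.sum_congr rfl hterm, Finset.sum_add_distrib, Finset.sum_const, ← Finset.mul_sum,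
    gauss_sum_aux, Nat.card_Icc]
  have hcard : ((n + 1 - (w + 1) : ℕ) : ℝ) = (n : ℝ) - w := by
    have : n + 1 - (w + 1) = n - w := by omega
    rw [this]; push_cast [hn]; ring
  rw [nsmul_eq_mul, hcard]
  have hlog := harmonic_log_aux w hw n hn
  have hw2 : (0 : ℝ) ≤ ((w : ℝ)^2 - w) / 2 := by
    have : (1 : ℝ) ≤ w := by exact_mod_cast hw
    nlinarith
  have hwn : (w : ℝ) ≤ n := by exact_mod_cast hn
  nlinarith [mul_le_mul_of_nonneg_left hlog hw2]
end

section
/- Let (P, ⊵) be a transitive relation and let (P, ≻) be a partial order with ≻ ⊆ ⊵ that is maximal among partial orders contained in ⊵ (i.e., for every pair (x,y) ∈ ⊵ \ ≻, adding (x,y) to ≻ and closing transitively fails to be irreflexive). Then any two elements incomparable in ≻ are also incomparable in ⊵; consequently, the width of (P, ≻) equals the width of (P, ⊵). -/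
/-- If `S` is a partial order contained in a transitive relation `R` and maximal
among partial orders contained in `R`, then elements incomparable in `S` are
incomparable in `R`; consequently the widths of `S` and `R` coincide. -/
theorem maximal_induced_poset_width {α : Type*} [Fintype α] [DecidableEq α]
    (R S : α → α → Prop)
    (hR : Transitive R) (hS : Transitive S) (hSirr : ∀ x, ¬ S x x)
    (hSR : ∀ x y, S x y → R x y)
    (hmax : ∀ x y, R x y → ¬ S x y →
      ∃ z, Relation.TransGen (fun a b => S a b ∨ (a = x ∧ b = y)) z z) :
    (∀ x y : α, x ≠ y → ¬ S x y → ¬ S y x → ¬ R x y ∧ ¬ R y x) ∧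
    sSup {k | ∃ A : Finset α,
        (∀ x ∈ A, ∀ y ∈ A, x ≠ y → ¬ S x y ∧ ¬ S y x) ∧ A.card = k} =
      sSup {k | ∃ A : Finset α,
        (∀ x ∈ A, ∀ y ∈ A, x ≠ y → ¬ R x y ∧ ¬ R y x) ∧ A.card = k} := by
  have key : ∀ x y : α, x ≠ y → ¬ S x y → ¬ S y x → ¬ R x y := by
    intro x y hxy hsxy hsyx hrxy
    obtain ⟨z, hz⟩ := hmax x y hrxy hsxy
    have main : ∀ a b : α, Relation.TransGen (fun a b => S a b ∨ (a = x ∧ b = y)) a b →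
        Relation.TransGen S a b ∨
        (Relation.ReflTransGen S a x ∧ Relation.ReflTransGen S y b) := by
      intro a b h
      induction h with
      | single h =>
        rcases h with h | ⟨rfl, rfl⟩
        · exact Or.inl (Relation.TransGen.single h)
        · exact Or.inr ⟨Relation.ReflTransGen.refl, Relation.ReflTransGen.refl⟩
      | tail hab hbc ih =>
        rcases hbc with h | ⟨rfl, rfl⟩
        · rcases ih with h1 | ⟨h1, h2⟩
          · exact Or.inl (h1.tail h)
          · exact Or.inr ⟨h1, h2.tail h⟩
        · rcases ih with h1 | ⟨h1, h2⟩
          · exact Or.inr ⟨h1.to_reflTransGen, Relation.ReflTransGen.refl⟩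
          · exact Or.inr ⟨h1, Relation.ReflTransGen.refl⟩
    rcases main z z hz with h | ⟨h1, h2⟩
    · exact hSirr z ((haveI : IsTrans α S := ⟨hS⟩; Relation.transGen_eq_self (r := S)) ▸ h)
    · have hyx : Relation.ReflTransGen S y x := h2.trans h1
      rcases Relation.reflTransGen_iff_eq_or_transGen.mp hyx with h | h
      · exact hxy h
      · exact hsyx ((haveI : IsTrans α S := ⟨hS⟩; Relation.transGen_eq_self (r := S)) ▸ h)
  have part1 : ∀ x y : α, x ≠ y → ¬ S x y → ¬ S y x → ¬ R x y ∧ ¬ R y x := by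
    intro x y hxy h1 h2
    exact ⟨key x y hxy h1 h2, key y x hxy.symm h2 h1⟩
  refine ⟨part1, ?_⟩
  have hset : {k | ∃ A : Finset α,
        (∀ x ∈ A, ∀ y ∈ A, x ≠ y → ¬ S x y ∧ ¬ S y x) ∧ A.card = k} =
      {k | ∃ A : Finset α,
        (∀ x ∈ A, ∀ y ∈ A, x ≠ y → ¬ R x y ∧ ¬ R y x) ∧ A.card = k} := by
    ext k
    constructor
    · rintro ⟨A, hA, rfl⟩
      exact ⟨A, fun x hx y hy hxy => part1 x y hxy (hA x hx y hy hxy).1 (hA x hx y hy hxy).2, rfl⟩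
    · rintro ⟨A, hA, rfl⟩
      refine ⟨A, fun x hx y hy hxy => ?_, rfl⟩
      exact ⟨fun h => (hA x hx y hy hxy).1 (hSR _ _ h),
             fun h => (hA x hx y hy hxy).2 (hSR _ _ h)⟩
  rw [hset]
end
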